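/- arXiv:2603.15219 — 3 statements merged into one kernel-verified Lean document; each statement's English description precedes it below -/
import Mathlib

section
/- Let X_k ∈ R^{n×d} stack the D-POEM iterates x_{i,k} as rows, J = (1/n)11ᵀ, X̃_k := (I−J)X_k, and σ := ‖W−J‖₂ < 1. Assume all agents share a common initialization x_{1,0} = ⋯ = x_{n,0}, the feasible set X has diameter D_X, and the algorithm performs X_{k+1} = Π_X^{row}(W X_k − S_k G_k) with S_k = diag(η_{1,k},…,η_{n,k}), η_{i,k} = r̄_{i,k}/√(G_{i,k}), r̄_{i,k} ≤ D_X, and G_{i,k} = G_{i,k−1} + ‖g_{i,k}‖². Then for any horizon K ≥ 1, (1/K) Σ_{k=0}^{K−1} ‖X̃_k‖_F ≤ (D_X/(1−σ)) √( (1/K) Σ_{i=1}^n log(G_{i,K−1}/G_{i,0}) ). -/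
/-!
The projection onto a convex set is 1-Lipschitz, and applying a 1-Lipschitz map to every row does
not increase the consensus error `eₖ = ‖(I - J) Xₖ‖_F`, because the mean minimises
`c ↦ ∑ᵢ ‖xᵢ - c‖²`. Since `W` has unit row and column sums,
`(I - J)(W X - V) = (W - J)(I - J) X - (I - J) V`, so `eₖ₊₁ ≤ σ eₖ + ‖Vₖ‖_F` for the step rows
`Vₖ = (ηᵢₖ gᵢₖ)ᵢ`, and `e₀ = 0`; hence `(1 - σ) ∑ₖ eₖ ≤ ∑ₖ ‖Vₖ‖_F`. As `r̄ ≤ D_X`,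
`‖Vₖ‖_F ≤ D_X √(∑ᵢ ‖gᵢₖ‖² / Gᵢₖ)`; the inequality `1 - 1/t ≤ log t` telescopes
`∑ₖ ‖gᵢₖ‖² / Gᵢₖ` to at most `log (G_{i,K-1} / G_{i,0})`, and Cauchy–Schwarz in `k` finishes.
-/

open Finset

lemma mul_sum_range_le_sum_of_le_mul_add {e a : ℕ → ℝ} {σ : ℝ} (he0 : e 0 = 0)
    (he : ∀ k, 0 ≤ e k) (h : ∀ k, e (k + 1) ≤ σ * e k + a k) (K : ℕ) :
    (1 - σ) * ∑ k ∈ range K, e k ≤ ∑ k ∈ range K, a k := by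
  have hsum := sum_le_sum fun k (_ : k ∈ range K) => h k
  rw [sum_add_distrib, ← mul_sum] at hsum
  linarith [sum_range_succ' e K, sum_range_succ e K, he K]

lemma one_div_mul_sum_range_le_of_le_mul_add {e b : ℕ → ℝ} {σ D : ℝ} (hσ : σ < 1) (hD : 0 ≤ D)
    (he0 : e 0 = 0) (he : ∀ k, 0 ≤ e k) (hb : ∀ k, 0 ≤ b k)
    (h : ∀ k, e (k + 1) ≤ σ * e k + D * √(b k)) (K : ℕ) :
    1 / K * ∑ k ∈ range K, e k ≤ D / (1 - σ) * √(1 / K * ∑ k ∈ range K, b k) := by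
  have hσ1 : 0 < 1 - σ := by linarith
  have hsum : (1 - σ) * ∑ k ∈ range K, e k ≤ D * (√K * √(∑ k ∈ range K, b k)) := calc
    (1 - σ) * ∑ k ∈ range K, e k ≤ ∑ k ∈ range K, D * √(b k) :=
      mul_sum_range_le_sum_of_le_mul_add he0 he h K
    _ = D * ∑ k ∈ range K, √1 * √(b k) := by simp [mul_sum]
    _ ≤ D * (√K * √(∑ k ∈ range K, b k)) := by
      gcongr
      simpa using Real.sum_sqrt_mul_sqrt_le (range K) (fun _ => zero_le_one) hb
  have hK : (K : ℝ)⁻¹ * √K = (√K)⁻¹ := by rw [← div_eq_inv_mul, Real.sqrt_div_self', one_div]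
  calc 1 / K * ∑ k ∈ range K, e k ≤ 1 / K * (D * (√K * √(∑ k ∈ range K, b k)) / (1 - σ)) := by
        gcongr
        rwa [le_div_iff₀' hσ1]
    _ = D / (1 - σ) * √(1 / K * ∑ k ∈ range K, b k) := by
        rw [Real.sqrt_mul (by positivity), one_div (K : ℝ), Real.sqrt_inv, ← hK]
        ring

lemma sum_range_sub_div_le_log_div {G : ℕ → ℝ} (hG : ∀ k, 0 < G k) (K : ℕ) :
    ∑ k ∈ range K, (G (k + 1) - G k) / G (k + 1) ≤ Real.log (G K / G 0) := by
  have hterm (k : ℕ) : (G (k + 1) - G k) / G (k + 1) ≤ Real.log (G (k + 1)) - Real.log (G k) := by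
    have := Real.log_le_sub_one_of_pos (div_pos (hG k) (hG (k + 1)))
    rw [Real.log_div (hG k).ne' (hG (k + 1)).ne'] at this
    rw [sub_div, div_self (hG (k + 1)).ne']
    linarith
  calc ∑ k ∈ range K, (G (k + 1) - G k) / G (k + 1)
      ≤ ∑ k ∈ range K, (Real.log (G (k + 1)) - Real.log (G k)) := sum_le_sum fun k _ => hterm k
    _ = Real.log (G K / G 0) := by
      rw [sum_range_sub (fun k => Real.log (G k)), Real.log_div (hG K).ne' (hG 0).ne']

section

variable {ι E : Type*} [Fintype ι] [NormedAddCommGroup E] [InnerProductSpace ℝ E]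

lemma Convex.lipschitzWith_one_of_nearest {X : Set E} (hX : Convex ℝ X) {P : E → E}
    (hmem : ∀ a, P a ∈ X) (hdist : ∀ a, ∀ y ∈ X, dist a (P a) ≤ dist a y) :
    LipschitzWith 1 P := by
  have hvar (a : E) : ∀ y ∈ X, inner ℝ (a - P a) (y - P a) ≤ 0 := by
    have : Nonempty X := ⟨⟨P a, hmem a⟩⟩
    refine (norm_eq_iInf_iff_real_inner_le_zero hX (hmem a)).1 (le_antisymm ?_ ?_)
    · exact le_ciInf fun y => by simpa [dist_eq_norm] using hdist a y y.2
    · exact ciInf_le ⟨0, by rintro _ ⟨y, rfl⟩; positivity⟩ (⟨P a, hmem a⟩ : X)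
  refine LipschitzWith.mk_one fun a b => ?_
  rw [dist_eq_norm, dist_eq_norm]
  -- adding the variational inequalities at `a` and at `b` gives firm nonexpansiveness
  have key : ‖P a - P b‖ ^ 2 ≤ inner ℝ (a - b) (P a - P b) := by
    have h1 := hvar a (P b) (hmem b)
    have h2 := hvar b (P a) (hmem a)
    rw [← real_inner_self_eq_norm_sq]
    simp only [inner_sub_left, inner_sub_right, real_inner_comm] at h1 h2 ⊢
    linarith
  nlinarith [real_inner_le_norm (a - b) (P a - P b), norm_nonneg (P a - P b), norm_nonneg (a - b)]

lemma sqrt_sum_norm_sub_sq_le {F : Type*} [SeminormedAddCommGroup F] (y z : ι → F) :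
    √(∑ i, ‖y i - z i‖ ^ 2) ≤ √(∑ i, ‖y i‖ ^ 2) + √(∑ i, ‖z i‖ ^ 2) := by
  simpa only [PiLp.norm_eq_of_L2, PiLp.sub_apply, PiLp.toLp_apply] using
    norm_sub_le (WithLp.toLp 2 y) (WithLp.toLp 2 z)

lemma sqrt_sum_norm_div_sqrt_smul_sq_le {F : Type*} [SeminormedAddCommGroup F] [NormedSpace ℝ F]
    {r s : ι → ℝ} {D : ℝ} (hD : 0 ≤ D) (hr0 : ∀ i, 0 ≤ r i)
    (hrD : ∀ i, r i ≤ D) (hs : ∀ i, 0 ≤ s i) (g : ι → F) :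
    √(∑ i, ‖(r i / √(s i)) • g i‖ ^ 2) ≤ D * √(∑ i, ‖g i‖ ^ 2 / s i) := by
  have hterm (i : ι) : ‖(r i / √(s i)) • g i‖ ^ 2 ≤ D ^ 2 * (‖g i‖ ^ 2 / s i) := by
    rw [norm_smul, mul_pow, Real.norm_eq_abs, sq_abs, div_pow, Real.sq_sqrt (hs i), div_mul_comm,
      mul_comm]
    exact mul_le_mul_of_nonneg_right (pow_le_pow_left₀ (hr0 i) (hrD i) 2)
      (div_nonneg (sq_nonneg _) (hs i))
  calc √(∑ i, ‖(r i / √(s i)) • g i‖ ^ 2) ≤ √(D ^ 2 * ∑ i, ‖g i‖ ^ 2 / s i) :=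
        Real.sqrt_le_sqrt (by rw [mul_sum]; exact sum_le_sum fun i _ => hterm i)
    _ = D * √(∑ i, ‖g i‖ ^ 2 / s i) := by rw [Real.sqrt_mul (sq_nonneg D), Real.sqrt_sq hD]

lemma sqrt_sum_norm_sum_smul_sq_le {κ : Type*} [Fintype κ] [DecidableEq ι] (M : Matrix ι ι ℝ)
    (y : ι → EuclideanSpace ℝ κ) :
    √(∑ i, ‖∑ j, M i j • y j‖ ^ 2)
      ≤ ‖Matrix.toEuclideanCLM (𝕜 := ℝ) M‖ * √(∑ j, ‖y j‖ ^ 2) := by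
  set T := Matrix.toEuclideanCLM (𝕜 := ℝ) M
  let col (c : κ) : EuclideanSpace ℝ ι := WithLp.toLp 2 fun j => y j c
  have hT (c : κ) : ‖T (col c)‖ ^ 2 = ∑ i, ((∑ j, M i j • y j) c) ^ 2 := by
    simp [T, col, EuclideanSpace.real_norm_sq_eq, Matrix.mulVec, dotProduct]
  have hsq : ∑ i, ‖∑ j, M i j • y j‖ ^ 2 ≤ ‖T‖ ^ 2 * ∑ j, ‖y j‖ ^ 2 := calc
    ∑ i, ‖∑ j, M i j • y j‖ ^ 2 = ∑ c, ‖T (col c)‖ ^ 2 := by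
      simp only [hT, EuclideanSpace.real_norm_sq_eq]; exact sum_comm
    _ ≤ ∑ c, ‖T‖ ^ 2 * ‖col c‖ ^ 2 := sum_le_sum fun c _ => by
      rw [← mul_pow]; exact pow_le_pow_left₀ (norm_nonneg _) (T.le_opNorm _) 2
    _ = ‖T‖ ^ 2 * ∑ j, ‖y j‖ ^ 2 := by
      simp only [← mul_sum, col, EuclideanSpace.real_norm_sq_eq]
      rw [sum_comm]
  calc √(∑ i, ‖∑ j, M i j • y j‖ ^ 2) ≤ √(‖T‖ ^ 2 * ∑ j, ‖y j‖ ^ 2) := Real.sqrt_le_sqrt hsq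
    _ = ‖T‖ * √(∑ j, ‖y j‖ ^ 2) := by rw [Real.sqrt_mul (sq_nonneg _), Real.sqrt_sq (norm_nonneg _)]

namespace Consensus

noncomputable def mean (y : ι → E) : E := (Fintype.card ι : ℝ)⁻¹ • ∑ i, y i

noncomputable def error (y : ι → E) : ℝ := √(∑ i, ‖y i - mean y‖ ^ 2)

lemma sum_sub_mean (y : ι → E) : ∑ i, (y i - mean y) = 0 := by
  rcases isEmpty_or_nonempty ι with hι | hι
  · simp
  · rw [sum_sub_distrib, sum_const, card_univ, ← Nat.cast_smul_eq_nsmul ℝ, mean, smul_smul,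
      mul_inv_cancel₀ (Nat.cast_ne_zero.2 Fintype.card_ne_zero), one_smul, sub_self]

lemma sum_norm_sub_mean_sq_le (y : ι → E) (c : E) :
    ∑ i, ‖y i - mean y‖ ^ 2 ≤ ∑ i, ‖y i - c‖ ^ 2 := by
  have h (i : ι) : ‖y i - c‖ ^ 2 = ‖y i - mean y‖ ^ 2
      + 2 * inner ℝ (y i - mean y) (mean y - c) + ‖mean y - c‖ ^ 2 := by
    rw [← norm_add_sq_real, sub_add_sub_cancel]
  simp only [h, sum_add_distrib, ← mul_sum, ← sum_inner, sum_sub_mean, inner_zero_left, mul_zero,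
    add_zero]
  exact le_add_of_nonneg_right (sum_nonneg fun _ _ => sq_nonneg _)

lemma error_comp_le {f : E → E} (hf : LipschitzWith 1 f) (y : ι → E) :
    error (fun i => f (y i)) ≤ error y := by
  refine Real.sqrt_le_sqrt ((sum_norm_sub_mean_sq_le _ (f (mean y))).trans ?_)
  refine sum_le_sum fun i _ => pow_le_pow_left₀ (norm_nonneg _) ?_ 2
  simpa [dist_eq_norm] using hf.dist_le_mul (y i) (mean y)

lemma error_eq_zero_of_forall_eq {y : ι → E} (hy : ∀ i j, y i = y j) : error y = 0 := by
  rcases isEmpty_or_nonempty ι with hι | ⟨⟨i₀⟩⟩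
  · simp [error]
  · rw [error, Real.sqrt_eq_zero']
    simpa [hy _ i₀] using sum_norm_sub_mean_sq_le y (y i₀)

lemma sub_mean_mix {W : Matrix ι ι ℝ} (hrow : ∀ i, ∑ j, W i j = 1) (hcol : ∀ j, ∑ i, W i j = 1)
    (x v : ι → E) (i : ι) :
    (∑ j, W i j • x j - v i) - mean (fun i => ∑ j, W i j • x j - v i)
      = ∑ j, (W i j - (Fintype.card ι : ℝ)⁻¹) • (x j - mean x) - (v i - mean v) := by
  have hmix : ∑ i, ∑ j, W i j • x j = ∑ j, x j := by
    rw [sum_comm]; simp only [← sum_smul, hcol, one_smul]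
  have hmean : mean (fun i => ∑ j, W i j • x j - v i) = mean x - mean v := by
    simp only [mean, sum_sub_distrib, hmix, smul_sub]
  have hdev : ∑ j, (W i j - (Fintype.card ι : ℝ)⁻¹) • (x j - mean x)
      = ∑ j, W i j • x j - mean x := calc
    _ = ∑ j, W i j • (x j - mean x) - (Fintype.card ι : ℝ)⁻¹ • ∑ j, (x j - mean x) := by
      rw [smul_sum, ← sum_sub_distrib]; simp only [sub_smul]
    _ = ∑ j, W i j • x j - mean x := by
      rw [sum_sub_mean, smul_zero, sub_zero]
      simp only [smul_sub, sum_sub_distrib, ← sum_smul, hrow, one_smul]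
  rw [hmean, hdev]
  abel

theorem error_mix_sub_le {κ : Type*} [Fintype κ] [DecidableEq ι]
    {P : EuclideanSpace ℝ κ → EuclideanSpace ℝ κ} (hP : LipschitzWith 1 P)
    {W : Matrix ι ι ℝ} (hrow : ∀ i, ∑ j, W i j = 1) (hcol : ∀ j, ∑ i, W i j = 1)
    (x v : ι → EuclideanSpace ℝ κ) :
    error (fun i => P (∑ j, W i j • x j - v i))
      ≤ ‖Matrix.toEuclideanCLM (n := ι) (𝕜 := ℝ) (W - Matrix.of fun _ _ => (Fintype.card ι : ℝ)⁻¹)‖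
          * error x + √(∑ i, ‖v i‖ ^ 2) := by
  set M := W - Matrix.of fun _ _ => (Fintype.card ι : ℝ)⁻¹
  have hdev (i : ι) : (∑ j, W i j • x j - v i) - mean (fun i => ∑ j, W i j • x j - v i)
      = ∑ j, M i j • (x j - mean x) - (v i - mean v) := by
    simp only [M, sub_mean_mix hrow hcol, Matrix.sub_apply, Matrix.of_apply]
  calc error (fun i => P (∑ j, W i j • x j - v i))
      ≤ error (fun i => ∑ j, W i j • x j - v i) := error_comp_le hP _
    _ = √(∑ i, ‖∑ j, M i j • (x j - mean x) - (v i - mean v)‖ ^ 2) := by simp only [error, hdev]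
    _ ≤ √(∑ i, ‖∑ j, M i j • (x j - mean x)‖ ^ 2) + √(∑ i, ‖v i - mean v‖ ^ 2) :=
      sqrt_sum_norm_sub_sq_le _ _
    _ ≤ ‖Matrix.toEuclideanCLM (𝕜 := ℝ) M‖ * error x + √(∑ i, ‖v i‖ ^ 2) :=
      add_le_add (sqrt_sum_norm_sum_smul_sq_le M _)
        (Real.sqrt_le_sqrt (by simpa using sum_norm_sub_mean_sq_le v 0))

end Consensus

end

-- `G i (k + 1)` is the paper's `G_{i,k}`, so `G i K` is `G_{i,K-1}`.
theorem stmt_3_general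
    (d n K : ℕ)
    (X : Set (EuclideanSpace ℝ (Fin d)))
    (hXconv : Convex ℝ X)
    (DX : ℝ) (hDX : DX = Metric.diam X)
    (proj : EuclideanSpace ℝ (Fin d) → EuclideanSpace ℝ (Fin d))
    (hproj_mem : ∀ a, proj a ∈ X)
    (hproj_dist : ∀ a, ∀ y ∈ X, dist a (proj a) ≤ dist a y)
    (W : Matrix (Fin n) (Fin n) ℝ)
    (hWrow : ∀ i, ∑ j, W i j = 1)
    (hWcol : ∀ j, ∑ i, W i j = 1)
    (σ : ℝ)
    (hσdef : σ = ‖(Matrix.toEuclideanCLM (𝕜 := ℝ) (W - Matrix.of fun _ _ => (1 : ℝ) / n) :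
      EuclideanSpace ℝ (Fin n) →L[ℝ] EuclideanSpace ℝ (Fin n))‖)
    (hσ : σ < 1)
    (x g : Fin n → ℕ → EuclideanSpace ℝ (Fin d))
    (hx_common : ∀ i j, x i 0 = x j 0)
    (rb : Fin n → ℕ → ℝ)
    (hrb_nonneg : ∀ i k, 0 ≤ rb i k)
    (hrbD : ∀ i k, rb i k ≤ DX)
    (G : Fin n → ℕ → ℝ)
    (hG0 : ∀ i, 0 < G i 0)
    (hGrec : ∀ i k, G i (k + 1) = G i k + ‖g i k‖ ^ 2)
    (η : Fin n → ℕ → ℝ)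
    (hη : ∀ i k, η i k = rb i k / Real.sqrt (G i (k + 1)))
    (hupdate : ∀ i k, x i (k + 1) = proj ((∑ j, W i j • x j k) - η i k • g i k))
    (xbar : ℕ → EuclideanSpace ℝ (Fin d))
    (hxbar : ∀ k, xbar k = (1 / (n : ℝ)) • ∑ i, x i k) :
    (1 / K) * ∑ k ∈ range K, Real.sqrt (∑ i, ‖x i k - xbar k‖ ^ 2)
      ≤ (DX / (1 - σ)) * Real.sqrt ((1 / K) * ∑ i, Real.log (G i K / G i 0)) := by
  have hDX0 : 0 ≤ DX := hDX ▸ Metric.diam_nonneg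
  have hG (i : Fin n) (k : ℕ) : 0 < G i k := by
    induction k with
    | zero => exact hG0 i
    | succ k ih => rw [hGrec]; positivity
  set e : ℕ → ℝ := fun k => Consensus.error (x · k)
  set b : ℕ → ℝ := fun k => ∑ i, ‖g i k‖ ^ 2 / G i (k + 1)
  have he (k : ℕ) : √(∑ i, ‖x i k - xbar k‖ ^ 2) = e k := by
    simp [e, Consensus.error, Consensus.mean, hxbar]
  have hb (k : ℕ) : 0 ≤ b k := sum_nonneg fun i _ => div_nonneg (sq_nonneg _) (hG i (k + 1)).le
  have hrec (k : ℕ) : e (k + 1) ≤ σ * e k + DX * √(b k) := by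
    have hstep := Consensus.error_mix_sub_le
      (hXconv.lipschitzWith_one_of_nearest hproj_mem hproj_dist) hWrow hWcol (x · k)
      (fun i => η i k • g i k)
    simp only [← hupdate] at hstep
    simp only [Fintype.card_fin, ← one_div, ← hσdef, hη] at hstep
    exact hstep.trans (add_le_add le_rfl (sqrt_sum_norm_div_sqrt_smul_sq_le hDX0
      (hrb_nonneg · k) (hrbD · k) (fun i => (hG i (k + 1)).le) _))
  have hbL : ∑ k ∈ range K, b k ≤ ∑ i, Real.log (G i K / G i 0) := by
    rw [sum_comm]
    exact sum_le_sum fun i _ => by simpa [hGrec] using sum_range_sub_div_le_log_div (hG i) K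
  simp only [he]
  calc 1 / K * ∑ k ∈ range K, e k ≤ DX / (1 - σ) * √(1 / K * ∑ k ∈ range K, b k) :=
        one_div_mul_sum_range_le_of_le_mul_add (e := e) hσ hDX0
          (Consensus.error_eq_zero_of_forall_eq hx_common) (fun _ => Real.sqrt_nonneg _) hb hrec K
    _ ≤ DX / (1 - σ) * √(1 / K * ∑ i, Real.log (G i K / G i 0)) := by gcongr

/-- Lemma 4, time-averaged consensus error.
Index convention: `G i 0` is the (positive) initial accumulator value and
`G i (k+1) = G i k + ‖g_{i,k}‖²` plays the role of `G_{i,k}`, so `G i K = G_{i,K−1}` and the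
ratio `G_{i,K−1}/G_{i,0}` is `G i K / G i 0`.  `σ = ‖W − J‖₂` is the spectral norm of `W − J`,
`X̃_k = (I−J)X_k` has rows `x_{i,k} − x̄_k`, and
`(1/K) Σ_{k<K} ‖X̃_k‖_F ≤ (D_X/(1−σ)) √((1/K) Σ_i log(G_{i,K−1}/G_{i,0}))`. -/
theorem stmt_3
    (d n K : ℕ) (hn : 0 < n) (hK : 1 ≤ K)
    (X : Set (EuclideanSpace ℝ (Fin d)))
    (hXconv : Convex ℝ X) (hXcomp : IsCompact X) (hXne : X.Nonempty)
    (DX : ℝ) (hDX : DX = Metric.diam X)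
    (proj : EuclideanSpace ℝ (Fin d) → EuclideanSpace ℝ (Fin d))
    (hproj_mem : ∀ a, proj a ∈ X)
    (hproj_dist : ∀ a, ∀ y ∈ X, dist a (proj a) ≤ dist a y)
    (W : Matrix (Fin n) (Fin n) ℝ)
    (hWsymm : W.IsSymm)
    (hWnonneg : ∀ i j, 0 ≤ W i j)
    (hWrow : ∀ i, ∑ j, W i j = 1)
    (hWcol : ∀ j, ∑ i, W i j = 1)
    (σ : ℝ)
    (hσdef : σ = ‖(Matrix.toEuclideanCLM (𝕜 := ℝ) (W - Matrix.of fun _ _ => (1 : ℝ) / n) :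
      EuclideanSpace ℝ (Fin n) →L[ℝ] EuclideanSpace ℝ (Fin n))‖)
    (hσ : σ < 1)
    (x g : Fin n → ℕ → EuclideanSpace ℝ (Fin d))
    (hx_common : ∀ i j, x i 0 = x j 0)
    (hx0X : ∀ i, x i 0 ∈ X)
    (rb : Fin n → ℕ → ℝ)
    (hrb_nonneg : ∀ i k, 0 ≤ rb i k)
    (hrbD : ∀ i k, rb i k ≤ DX)
    (G : Fin n → ℕ → ℝ)
    (hG0 : ∀ i, 0 < G i 0)
    (hGrec : ∀ i k, G i (k + 1) = G i k + ‖g i k‖ ^ 2)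
    (η : Fin n → ℕ → ℝ)
    (hη : ∀ i k, η i k = rb i k / Real.sqrt (G i (k + 1)))
    (hupdate : ∀ i k, x i (k + 1) = proj ((∑ j, W i j • x j k) - η i k • g i k))
    (xbar : ℕ → EuclideanSpace ℝ (Fin d))
    (hxbar : ∀ k, xbar k = (1 / (n : ℝ)) • ∑ i, x i k) :
    (1 / K) * ∑ k ∈ range K, Real.sqrt (∑ i, ‖x i k - xbar k‖ ^ 2)
      ≤ (DX / (1 - σ)) * Real.sqrt ((1 / K) * ∑ i, Real.log (G i K / G i 0)) :=
  stmt_3_general d n K X hXconv DX hDX proj hproj_mem hproj_dist W hWrow hWcol σ hσdef hσ x g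
    hx_common rb hrb_nonneg hrbD G hG0 hGrec η hη hupdate xbar hxbar
end

section
/- Let x_{i,k} ∈ R^d be the D-POEM iterates, W symmetric doubly stochastic, z_{i,k} = Σ_j w_{ij} x_{j,k}, x̄_k = (1/n)Σ_i x_{i,k}, X_k the n×d matrix stacking x_{i,k} as rows, E_k := ‖(I−J)X_k‖_F, and G_k ∈ R^{n×d} the matrix stacking g_{i,k}ᵀ. Then for every t ≥ 1, the disagreement penalty E_t := Σ_{k=0}^{t−1} (r̄_k/n) Σ_{i=1}^n ⟨g_{i,k}, x_{i,k} − z_{i,k}⟩ + Σ_{k=0}^{t−1} (L r̄_k/n) Σ_{i=1}^n ‖x_{i,k} − x̄_k‖ satisfies E_t ≤ (2/n) Σ_{k=0}^{t−1} r̄_k ‖G_k‖_F E_k + (L/√n) Σ_{k=0}^{t−1} r̄_k E_k. -/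
/-!
Row sums equal to one let any center `c` be subtracted inside the mixing step, so
`x_i - z_i = (x_i - c) - Σ_j w_ij (x_j - c)`. By Jensen's inequality for `‖·‖²` and the
column sums, mixing does not increase `Σ_i ‖x_i - c‖²`; Cauchy–Schwarz then bounds the
gradient term by `2 ‖G‖_F E`. The Lipschitz term is the comparison `‖·‖₁ ≤ √n ‖·‖₂` on the
deviations.
-/

open Finset

theorem sum_smul_sub_eq_sum_smul_sub {ι R M : Type*} [Fintype ι] [Ring R] [AddCommGroup M]
    [Module R M] {w : ι → R} (hw : ∑ j, w j = 1) (v : ι → M) (c : M) :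
    ∑ j, w j • v j - c = ∑ j, w j • (v j - c) := by
  simp only [smul_sub, sum_sub_distrib, ← sum_smul, hw, one_smul]

section Mixing

variable {ι E : Type*} [Fintype ι] [NormedAddCommGroup E]

theorem norm_sum_smul_sq_le [NormedSpace ℝ E] {w : ι → ℝ} (hw₀ : ∀ j, 0 ≤ w j)
    (hw : ∑ j, w j = 1) (u : ι → E) :
    ‖∑ j, w j • u j‖ ^ 2 ≤ ∑ j, w j * ‖u j‖ ^ 2 := by
  simpa [smul_eq_mul] using
    ((convexOn_norm convex_univ).pow (fun _ _ ↦ norm_nonneg _) 2).map_sum_le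
      (fun j _ ↦ hw₀ j) hw (fun _ _ ↦ Set.mem_univ (u _))

theorem sum_norm_sum_smul_sq_le [NormedSpace ℝ E] {W : Matrix ι ι ℝ}
    (hW₀ : ∀ i j, 0 ≤ W i j) (hrow : ∀ i, ∑ j, W i j = 1)
    (hcol : ∀ j, ∑ i, W i j = 1) (u : ι → E) :
    ∑ i, ‖∑ j, W i j • u j‖ ^ 2 ≤ ∑ j, ‖u j‖ ^ 2 :=
  calc ∑ i, ‖∑ j, W i j • u j‖ ^ 2 ≤ ∑ i, ∑ j, W i j * ‖u j‖ ^ 2 :=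
        sum_le_sum fun i _ ↦ norm_sum_smul_sq_le (hW₀ i) (hrow i) u
    _ = ∑ j, ‖u j‖ ^ 2 := by simp only [sum_comm (γ := ι), ← sum_mul, hcol, one_mul]

theorem sum_inner_sub_sum_smul_le [InnerProductSpace ℝ E] {W : Matrix ι ι ℝ}
    (hW₀ : ∀ i j, 0 ≤ W i j) (hrow : ∀ i, ∑ j, W i j = 1)
    (hcol : ∀ j, ∑ i, W i j = 1) (g x : ι → E) (c : E) :
    ∑ i, inner ℝ (g i) (x i - ∑ j, W i j • x j)
      ≤ 2 * √(∑ i, ‖g i‖ ^ 2) * √(∑ i, ‖x i - c‖ ^ 2) := by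
  set G := √(∑ i, ‖g i‖ ^ 2)
  set D := √(∑ i, ‖x i - c‖ ^ 2)
  have hmix : √(∑ i, ‖∑ j, W i j • x j - c‖ ^ 2) ≤ D := by
    simp only [sum_smul_sub_eq_sum_smul_sub (hrow _)]
    exact Real.sqrt_le_sqrt (sum_norm_sum_smul_sq_le hW₀ hrow hcol _)
  calc ∑ i, inner ℝ (g i) (x i - ∑ j, W i j • x j)
      ≤ ∑ i, ‖g i‖ * (‖x i - c‖ + ‖∑ j, W i j • x j - c‖) := by
        refine sum_le_sum fun i _ ↦ (real_inner_le_norm _ _).trans ?_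
        gcongr
        simpa only [sub_sub_sub_cancel_right] using norm_sub_le (x i - c) (∑ j, W i j • x j - c)
    _ = ∑ i, ‖g i‖ * ‖x i - c‖ + ∑ i, ‖g i‖ * ‖∑ j, W i j • x j - c‖ := by
        simp only [mul_add, sum_add_distrib]
    _ ≤ G * D + G * D := by
        gcongr
        · exact Real.sum_mul_le_sqrt_mul_sqrt _ _ _
        · exact (Real.sum_mul_le_sqrt_mul_sqrt _ _ _).trans (by gcongr)
    _ = 2 * G * D := by ring

end Mixing

theorem sum_le_sqrt_card_mul_sqrt_sum_sq {ι : Type*} [Fintype ι] (f : ι → ℝ) :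
    ∑ i, f i ≤ √(Fintype.card ι) * √(∑ i, f i ^ 2) := by
  simpa using Real.sum_mul_le_sqrt_mul_sqrt univ (fun _ ↦ (1 : ℝ)) f

theorem stmt_4_general
    (d n : ℕ) (hn : 0 < n)
    (L : ℝ) (hL : 0 ≤ L)
    (W : Matrix (Fin n) (Fin n) ℝ)
    (hWnonneg : ∀ i j, 0 ≤ W i j)
    (hWrow : ∀ i, ∑ j, W i j = 1)
    (hWcol : ∀ j, ∑ i, W i j = 1)
    (x g : Fin n → ℕ → EuclideanSpace ℝ (Fin d))
    (z : Fin n → ℕ → EuclideanSpace ℝ (Fin d))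
    (hz : ∀ i k, z i k = ∑ j, W i j • x j k)
    (xbar : ℕ → EuclideanSpace ℝ (Fin d))
    (rbar : ℕ → ℝ) (hrbar_nonneg : ∀ k, 0 ≤ rbar k)
    (Efun : ℕ → ℝ) (hEfun : ∀ k, Efun k = Real.sqrt (∑ i, ‖x i k - xbar k‖ ^ 2))
    (Gfrob : ℕ → ℝ) (hGfrob : ∀ k, Gfrob k = Real.sqrt (∑ i, ‖g i k‖ ^ 2))
    (t : ℕ) :
    (∑ k ∈ range t, (rbar k / n) * ∑ i, (inner ℝ (g i k) (x i k - z i k) : ℝ))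
      + (∑ k ∈ range t, (L * rbar k / n) * ∑ i, ‖x i k - xbar k‖)
      ≤ (2 / n) * ∑ k ∈ range t, rbar k * Gfrob k * Efun k
        + (L / Real.sqrt n) * ∑ k ∈ range t, rbar k * Efun k := by
  have hn' : (0 : ℝ) < n := by exact_mod_cast hn
  have hsqrt : √(n : ℝ) * √(n : ℝ) = n := Real.mul_self_sqrt hn'.le
  have hsqrt₀ : √(n : ℝ) ≠ 0 := (Real.sqrt_pos.2 hn').ne'
  refine add_le_add ?_ ?_ <;> rw [mul_sum] <;> refine sum_le_sum fun k _ ↦ ?_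
  · calc rbar k / n * ∑ i, inner ℝ (g i k) (x i k - z i k)
        ≤ rbar k / n * (2 * Gfrob k * Efun k) := by
          refine mul_le_mul_of_nonneg_left ?_ (div_nonneg (hrbar_nonneg k) hn'.le)
          simpa only [hz, hGfrob, hEfun] using
            sum_inner_sub_sum_smul_le hWnonneg hWrow hWcol (g · k) (x · k) (xbar k)
      _ = 2 / n * (rbar k * Gfrob k * Efun k) := by ring
  · calc L * rbar k / n * ∑ i, ‖x i k - xbar k‖
        ≤ L * rbar k / n * (√n * Efun k) := by
          refine mul_le_mul_of_nonneg_left ?_ (div_nonneg (mul_nonneg hL (hrbar_nonneg k)) hn'.le)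
          simpa only [hEfun, Fintype.card_fin] using
            sum_le_sqrt_card_mul_sqrt_sum_sq (‖x · k - xbar k‖)
      _ = L / √n * (rbar k * Efun k) := by
          rw [div_mul_eq_mul_div, div_mul_eq_mul_div, div_eq_div_iff hn'.ne' hsqrt₀]
          linear_combination (L * rbar k * Efun k) * hsqrt

/-- Lemma 5, consensus error: with `z_{i,k} = Σ_j w_{ij} x_{j,k}`,
`x̄_k = (1/n) Σ_i x_{i,k}`, `E_k = ‖(I−J)X_k‖_F = √(Σ_i ‖x_{i,k} − x̄_k‖²)` and
`‖G_k‖_F = √(Σ_i ‖g_{i,k}‖²)`, the disagreement penalty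
`E_t = Σ_{k<t} (r̄_k/n) Σ_i ⟨g_{i,k}, x_{i,k} − z_{i,k}⟩ + Σ_{k<t} (L r̄_k/n) Σ_i ‖x_{i,k} − x̄_k‖`
satisfies `E_t ≤ (2/n) Σ_{k<t} r̄_k ‖G_k‖_F E_k + (L/√n) Σ_{k<t} r̄_k E_k`. -/
theorem stmt_4
    (d n : ℕ) (hn : 0 < n)
    (L : ℝ) (hL : 0 ≤ L)
    (W : Matrix (Fin n) (Fin n) ℝ)
    (hWsymm : W.IsSymm)
    (hWnonneg : ∀ i j, 0 ≤ W i j)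
    (hWrow : ∀ i, ∑ j, W i j = 1)
    (hWcol : ∀ j, ∑ i, W i j = 1)
    (x g : Fin n → ℕ → EuclideanSpace ℝ (Fin d))
    (z : Fin n → ℕ → EuclideanSpace ℝ (Fin d))
    (hz : ∀ i k, z i k = ∑ j, W i j • x j k)
    (xbar : ℕ → EuclideanSpace ℝ (Fin d))
    (hxbar : ∀ k, xbar k = (1 / (n : ℝ)) • ∑ i, x i k)
    (rbar : ℕ → ℝ) (hrbar_nonneg : ∀ k, 0 ≤ rbar k)
    (Efun : ℕ → ℝ) (hEfun : ∀ k, Efun k = Real.sqrt (∑ i, ‖x i k - xbar k‖ ^ 2))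
    (Gfrob : ℕ → ℝ) (hGfrob : ∀ k, Gfrob k = Real.sqrt (∑ i, ‖g i k‖ ^ 2))
    (t : ℕ) (ht : 1 ≤ t) :
    (∑ k ∈ range t, (rbar k / n) * ∑ i, (inner ℝ (g i k) (x i k - z i k) : ℝ))
      + (∑ k ∈ range t, (L * rbar k / n) * ∑ i, ‖x i k - xbar k‖)
      ≤ (2 / n) * ∑ k ∈ range t, rbar k * Gfrob k * Efun k
        + (L / Real.sqrt n) * ∑ k ∈ range t, rbar k * Efun k :=
  stmt_4_general d n hn L hL W hWnonneg hWrow hWcol x g z hz xbar rbar hrbar_nonneg Efun hEfun Gfrob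
    hGfrob t
end

section
/- Let f = (1/n)Σ_{i=1}^n f_i with each f_i convex and L-Lipschitz, x* ∈ X a minimizer of f over X, x_{i,k} ∈ X arbitrary points, x̄_k = (1/n)Σ_i x_{i,k}, z_{i,k} = Σ_j w_{ij} x_{j,k} for a doubly stochastic W, r̄_k > 0 weights, R_t = Σ_{k=0}^{t−1} r̄_k, and x̃_t = (Σ_{k=0}^{t−1} r̄_k x̄_k)/R_t. Suppose each smoothed function f_{i,μ} (ball smoothing with radius μ) is convex, differentiable, and satisfies f_i(x) ≤ f_{i,μ}(x) ≤ f_i(x) + Lμ for all x, and write Δ_{i,k} = ∇f_{i,μ_{i,k}}(x_{i,k}) − g_{i,k}. Then for every t ≥ 1: R_t (f(x̃_t) − f(x*)) ≤ W_t + N_t + B_t + E_t, where W_t = Σ_k (r̄_k/n) Σ_i ⟨g_{i,k}, z_{i,k} − x*⟩, N_t = Σ_k r̄_k (1/n) Σ_i ⟨Δ_{i,k}, x_{i,k} − x*⟩, B_t = Σ_k (2L r̄_k/n) Σ_i μ_{i,k}, and E_t = Σ_k (r̄_k/n) Σ_i ⟨g_{i,k}, x_{i,k} − z_{i,k}⟩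 + Σ_k (L r̄_k/n) Σ_i ‖x_{i,k} − x̄_k‖ (all sums over k = 0,…,t−1). -/
/-!
Jensen's inequality for the convex average `f` bounds `R_t (f(x̃_t) − f(x*))` by
`Σ_k r̄_k (f(x̄_k) − f(x*))`. Agent by agent, the Lipschitz bound moves `x̄_k` to `x_{i,k}`, the
sandwich `f_i ≤ f_{i,μ} ≤ f_i + Lμ` passes to the smoothed function at the cost of `Lμ ≤ 2Lμ`, and
the first-order convexity inequality of `f_{i,μ}` at `x_{i,k}` gives
`⟨∇f_{i,μ}(x_{i,k}), x_{i,k} − x*⟩ = ⟨Δ_{i,k} + g_{i,k}, x_{i,k} − x*⟩`, whose `g`-part is split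
through `z_{i,k}`.
-/

open Finset

section Convexity

variable {𝕜 E β ι : Type*}

theorem ConvexOn.sum [Semiring 𝕜] [PartialOrder 𝕜] [AddCommMonoid E] [AddCommMonoid β]
    [PartialOrder β] [IsOrderedAddMonoid β] [SMul 𝕜 E] [Module 𝕜 β] {D : Set E}
    (hD : Convex 𝕜 D) (s : Finset ι) {f : ι → E → β} (hf : ∀ i ∈ s, ConvexOn 𝕜 D (f i)) :
    ConvexOn 𝕜 D (∑ i ∈ s, f i) := by
  classical
  induction s using Finset.induction with
  | empty => exact convexOn_const (0 : β) hD
  | insert j s hj ih =>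
    rw [sum_insert hj]
    exact (hf j (mem_insert_self j s)).add (ih fun i hi => hf i (mem_insert_of_mem hi))

theorem ConvexOn.sum_mul_map_centerMass_le [AddCommGroup E] [Module ℝ E] {D : Set E} {φ : E → ℝ}
    (hφ : ConvexOn ℝ D φ) (s : Finset ι) {w : ι → ℝ} {p : ι → E} (hw : ∀ i ∈ s, 0 ≤ w i)
    (hp : ∀ i ∈ s, p i ∈ D) :
    (∑ i ∈ s, w i) * φ (s.centerMass w p) ≤ ∑ i ∈ s, w i * φ (p i) := by
  rcases (sum_nonneg hw).eq_or_lt with hzero | hpos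
  · have hw0 := (sum_eq_zero_iff_of_nonneg hw).1 hzero.symm
    rw [← hzero, zero_mul, sum_eq_zero fun i hi => by rw [hw0 i hi, zero_mul]]
  · calc (∑ i ∈ s, w i) * φ (s.centerMass w p)
        ≤ (∑ i ∈ s, w i) * s.centerMass w (φ ∘ p) := by
          gcongr; exact hφ.map_centerMass_le hw hpos hp
      _ = ∑ i ∈ s, w i * φ (p i) := by
          rw [centerMass, smul_eq_mul, mul_inv_cancel_left₀ hpos.ne']
          rfl

theorem ConvexOn.add_apply_sub_le_of_hasFDerivAt {F : Type*} [NormedAddCommGroup F] [NormedSpace ℝ F]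
    {S : Set F} {φ : F → ℝ} {φ' : F →L[ℝ] ℝ} {a b : F} (hφ : ConvexOn ℝ S φ) (ha : a ∈ S)
    (hb : b ∈ S) (hd : HasFDerivAt φ φ' a) : φ a + φ' (b - a) ≤ φ b := by
  have hψ : HasDerivAt (φ ∘ AffineMap.lineMap a b) (φ' (b - a)) (0 : ℝ) := by
    refine HasFDerivAt.comp_hasDerivAt (0 : ℝ) ?_ AffineMap.hasDerivAt_lineMap
    simpa using hd
  have h := (hφ.comp_affineMap (AffineMap.lineMap a b)).le_slope_of_hasDerivAt
    (by simpa using ha) (by simpa using hb) zero_lt_one hψ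
  simp only [slope_def_field, Function.comp_apply, AffineMap.lineMap_apply_zero,
    AffineMap.lineMap_apply_one, sub_zero, div_one] at h
  linarith

theorem ConvexOn.sub_le_inner_gradient {F : Type*} [NormedAddCommGroup F] [InnerProductSpace ℝ F]
    [CompleteSpace F] {S : Set F} {φ : F → ℝ} {a b : F} (hφ : ConvexOn ℝ S φ) (ha : a ∈ S)
    (hb : b ∈ S) (hd : DifferentiableAt ℝ φ a) : φ a - φ b ≤ inner ℝ (gradient φ a) (a - b) := by
  have h := hφ.add_apply_sub_le_of_hasFDerivAt ha hb hd.hasGradientAt.hasFDerivAt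
  rw [InnerProductSpace.toDual_apply_apply, ← neg_sub a b, inner_neg_right] at h
  linarith

end Convexity

theorem sub_le_of_smoothing_sandwich {F : Type*} [NormedAddCommGroup F] [InnerProductSpace ℝ F]
    [CompleteSpace F] {f φ : F → ℝ} {L c : ℝ} {x : F} (hf : ∀ a b, |f a - f b| ≤ L * ‖a - b‖)
    (hφ : ConvexOn ℝ Set.univ φ) (hd : DifferentiableAt ℝ φ x) (hle : ∀ y, f y ≤ φ y)
    (hge : ∀ y, φ y ≤ f y + c) (xstar y z g : F) :
    f y - f xstar ≤ inner ℝ g (z - xstar) + inner ℝ (gradient φ x - g) (x - xstar) + 2 * c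
      + inner ℝ g (x - z) + L * ‖x - y‖ := by
  have hc : 0 ≤ c := by linarith [hle xstar, hge xstar]
  have hlip : f y - f x ≤ L * ‖x - y‖ :=
    norm_sub_rev x y ▸ (le_abs_self _).trans (hf y x)
  have hgrad := hφ.sub_le_inner_gradient (Set.mem_univ x) (Set.mem_univ xstar) hd
  have hsplit : inner ℝ g (z - xstar) + inner ℝ g (x - z) = inner ℝ g (x - xstar) := by
    rw [← inner_add_right, sub_add_sub_cancel']
  rw [inner_sub_left]
  linarith [hle x, hge xstar]

theorem stmt_9_general
    (d n : ℕ)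
    (L : ℝ)
    (f : Fin n → EuclideanSpace ℝ (Fin d) → ℝ)
    (hfconv : ∀ i, ConvexOn ℝ Set.univ (f i))
    (hfLip : ∀ i a b, |f i a - f i b| ≤ L * ‖a - b‖)
    (favg : EuclideanSpace ℝ (Fin d) → ℝ)
    (hfavg : ∀ y, favg y = (1 / n) * ∑ i, f i y)
    (xstar : EuclideanSpace ℝ (Fin d))
    (x g : Fin n → ℕ → EuclideanSpace ℝ (Fin d))
    (z : Fin n → ℕ → EuclideanSpace ℝ (Fin d))
    (xbar : ℕ → EuclideanSpace ℝ (Fin d))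
    (rbar : ℕ → ℝ) (hrbar_pos : ∀ k, 0 < rbar k)
    (R : ℕ → ℝ) (hR : ∀ t, R t = ∑ k ∈ range t, rbar k)
    (xtilde : ℕ → EuclideanSpace ℝ (Fin d))
    (hxtilde : ∀ t, xtilde t = (R t)⁻¹ • ∑ k ∈ range t, rbar k • xbar k)
    (μ : Fin n → ℕ → ℝ) (hμpos : ∀ i k, 0 < μ i k)
    (fsm : Fin n → ℝ → EuclideanSpace ℝ (Fin d) → ℝ)
    (hfsm_conv : ∀ i ν, 0 < ν → ConvexOn ℝ Set.univ (fsm i ν))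
    (hfsm_diff : ∀ i ν, 0 < ν → Differentiable ℝ (fsm i ν))
    (hfsm_le : ∀ i ν, 0 < ν → ∀ y, f i y ≤ fsm i ν y)
    (hfsm_ge : ∀ i ν, 0 < ν → ∀ y, fsm i ν y ≤ f i y + L * ν)
    (Δ : Fin n → ℕ → EuclideanSpace ℝ (Fin d))
    (hΔ : ∀ i k, Δ i k = gradient (fsm i (μ i k)) (x i k) - g i k)
    (t : ℕ) :
    R t * (favg (xtilde t) - favg xstar)
      ≤ (∑ k ∈ range t, (rbar k / n) * ∑ i, (inner ℝ (g i k) (z i k - xstar) : ℝ))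
        + (∑ k ∈ range t, rbar k * ((1 / n) * ∑ i, (inner ℝ (Δ i k) (x i k - xstar) : ℝ)))
        + (∑ k ∈ range t, (2 * L * rbar k / n) * ∑ i, μ i k)
        + ((∑ k ∈ range t, (rbar k / n) * ∑ i, (inner ℝ (g i k) (x i k - z i k) : ℝ))
            + (∑ k ∈ range t, (L * rbar k / n) * ∑ i, ‖x i k - xbar k‖)) := by
  have hfavg_conv : ConvexOn ℝ Set.univ favg := by
    have hfavg_eq : favg = fun y => (1 / n : ℝ) • (∑ i, f i) y :=
      funext fun y => by rw [hfavg, smul_eq_mul, Finset.sum_apply]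
    rw [hfavg_eq]
    exact (ConvexOn.sum convex_univ univ fun i _ => hfconv i).smul (by positivity)
  have hjensen : R t * favg (xtilde t) ≤ ∑ k ∈ range t, rbar k * favg (xbar k) := by
    simpa only [hxtilde, hR, centerMass] using hfavg_conv.sum_mul_map_centerMass_le (range t)
      (fun k _ => (hrbar_pos k).le) (p := xbar) fun k _ => Set.mem_univ _
  calc R t * (favg (xtilde t) - favg xstar)
      ≤ ∑ k ∈ range t, rbar k * (favg (xbar k) - favg xstar) := by
        have hsplit : ∑ k ∈ range t, rbar k * (favg (xbar k) - favg xstar)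
            = ∑ k ∈ range t, rbar k * favg (xbar k) - R t * favg xstar := by
          rw [hR, sum_mul, ← sum_sub_distrib]
          simp only [mul_sub]
        linarith
    _ ≤ ∑ k ∈ range t, (rbar k / n) * ∑ i, (inner ℝ (g i k) (z i k - xstar)
          + inner ℝ (Δ i k) (x i k - xstar) + 2 * L * μ i k
          + inner ℝ (g i k) (x i k - z i k) + L * ‖x i k - xbar k‖) := by
        refine sum_le_sum fun k _ => ?_
        have := (hrbar_pos k).le
        rw [hfavg, hfavg, ← mul_sub, ← sum_sub_distrib, ← mul_assoc, mul_one_div]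
        gcongr with i
        have hμ := hμpos i k
        have := sub_le_of_smoothing_sandwich (hfLip i) (hfsm_conv i _ hμ) (hfsm_diff i _ hμ (x i k))
          (hfsm_le i _ hμ) (hfsm_ge i _ hμ) xstar (xbar k) (z i k) (g i k)
        rw [hΔ]
        linarith
    _ = _ := by
        simp only [mul_sum, ← sum_add_distrib]
        exact sum_congr rfl fun k _ => sum_congr rfl fun i _ => by ring

/-- Lemma 6, basic decomposition. With `f = (1/n)Σ_i f_i`, each `f_i` convex and
`L`-Lipschitz, `x* ∈ X` a minimizer of `f` over `X`, arbitrary points `x_{i,k} ∈ X`,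
`x̄_k = (1/n)Σ_i x_{i,k}`, `z_{i,k} = Σ_j w_{ij}x_{j,k}` (`W` doubly stochastic), positive
weights `r̄_k`, `R_t = Σ_{k<t} r̄_k`, `x̃_t = (Σ_{k<t} r̄_k x̄_k)/R_t`, smoothed functions
`f_{i,μ}` that are convex, differentiable, and satisfy `f_i ≤ f_{i,μ} ≤ f_i + Lμ`, and
`Δ_{i,k} = ∇f_{i,μ_{i,k}}(x_{i,k}) − g_{i,k}`, one has
`R_t (f(x̃_t) − f(x*)) ≤ W_t + N_t + B_t + E_t`. -/
theorem stmt_9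
    (d n : ℕ) (hn : 0 < n)
    (L : ℝ) (hL : 0 < L)
    (X : Set (EuclideanSpace ℝ (Fin d))) (hXconv : Convex ℝ X)
    (f : Fin n → EuclideanSpace ℝ (Fin d) → ℝ)
    (hfconv : ∀ i, ConvexOn ℝ Set.univ (f i))
    (hfLip : ∀ i a b, |f i a - f i b| ≤ L * ‖a - b‖)
    (favg : EuclideanSpace ℝ (Fin d) → ℝ)
    (hfavg : ∀ y, favg y = (1 / n) * ∑ i, f i y)
    (xstar : EuclideanSpace ℝ (Fin d)) (hxstarX : xstar ∈ X)
    (hxstar_min : ∀ y ∈ X, favg xstar ≤ favg y)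
    (W : Matrix (Fin n) (Fin n) ℝ)
    (hWnonneg : ∀ i j, 0 ≤ W i j)
    (hWrow : ∀ i, ∑ j, W i j = 1)
    (hWcol : ∀ j, ∑ i, W i j = 1)
    (x g : Fin n → ℕ → EuclideanSpace ℝ (Fin d))
    (hxX : ∀ i k, x i k ∈ X)
    (z : Fin n → ℕ → EuclideanSpace ℝ (Fin d))
    (hz : ∀ i k, z i k = ∑ j, W i j • x j k)
    (xbar : ℕ → EuclideanSpace ℝ (Fin d))
    (hxbar : ∀ k, xbar k = (1 / (n : ℝ)) • ∑ i, x i k)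
    (rbar : ℕ → ℝ) (hrbar_pos : ∀ k, 0 < rbar k)
    (R : ℕ → ℝ) (hR : ∀ t, R t = ∑ k ∈ range t, rbar k)
    (xtilde : ℕ → EuclideanSpace ℝ (Fin d))
    (hxtilde : ∀ t, xtilde t = (R t)⁻¹ • ∑ k ∈ range t, rbar k • xbar k)
    (μ : Fin n → ℕ → ℝ) (hμpos : ∀ i k, 0 < μ i k)
    (fsm : Fin n → ℝ → EuclideanSpace ℝ (Fin d) → ℝ)
    (hfsm_conv : ∀ i ν, 0 < ν → ConvexOn ℝ Set.univ (fsm i ν))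
    (hfsm_diff : ∀ i ν, 0 < ν → Differentiable ℝ (fsm i ν))
    (hfsm_le : ∀ i ν, 0 < ν → ∀ y, f i y ≤ fsm i ν y)
    (hfsm_ge : ∀ i ν, 0 < ν → ∀ y, fsm i ν y ≤ f i y + L * ν)
    (Δ : Fin n → ℕ → EuclideanSpace ℝ (Fin d))
    (hΔ : ∀ i k, Δ i k = gradient (fsm i (μ i k)) (x i k) - g i k)
    (t : ℕ) (ht : 1 ≤ t) :
    R t * (favg (xtilde t) - favg xstar)
      ≤ (∑ k ∈ range t, (rbar k / n) * ∑ i, (inner ℝ (g i k) (z i k - xstar) : ℝ))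
        + (∑ k ∈ range t, rbar k * ((1 / n) * ∑ i, (inner ℝ (Δ i k) (x i k - xstar) : ℝ)))
        + (∑ k ∈ range t, (2 * L * rbar k / n) * ∑ i, μ i k)
        + ((∑ k ∈ range t, (rbar k / n) * ∑ i, (inner ℝ (g i k) (x i k - z i k) : ℝ))
            + (∑ k ∈ range t, (L * rbar k / n) * ∑ i, ‖x i k - xbar k‖)) :=
  stmt_9_general d n L f hfconv hfLip favg hfavg xstar x g z xbar rbar hrbar_pos R hR xtilde hxtilde
    μ hμpos fsm hfsm_conv hfsm_diff hfsm_le hfsm_ge Δ hΔ t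
end
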